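/- arXiv:2011.04922 — 2 statements merged into one kernel-verified Lean document; each statement's English description precedes it below -/
import Mathlib

section
/- Fix integers d ≥ 1 and ℓ ≥ 1, and let U₁, …, U_M be the points of the ℓ-th principal lattice P_ℓ of the simplex Δ_d, where M = binom(ℓ+d, d). Then the Vandermonde-type matrix 𝒱 defined by 𝒱_{k,α} = U_k^α is invertible. -/
open MeasureTheory Finset
open scoped ENNReal

noncomputable section

/-- The largest integer strictly less than `β` (for `β > 0`). -/
def lflr (β : ℝ) : ℕ := ⌈β⌉₊ - 1

/-- The Euclidean (`ℓ²`) norm on `Fin d → ℝ`. -/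
noncomputable def l2norm {d : ℕ} (x : Fin d → ℝ) : ℝ := Real.sqrt (∑ i, x i ^ 2)

/-- Partial derivative in coordinate `i`. -/
noncomputable def pder {d : ℕ} (i : Fin d) (f : (Fin d → ℝ) → ℝ) : (Fin d → ℝ) → ℝ :=
  fun x => fderiv ℝ f x (Pi.single i 1)

/-- The multi-index partial differential operator `D^s`. -/
noncomputable def mderiv {d : ℕ} (s : Fin d → ℕ) (f : (Fin d → ℝ) → ℝ) : (Fin d → ℝ) → ℝ :=
  (List.finRange d).foldr (fun i g => (pder i)^[s i] g) f

/-- The Hölder class `H(β, L)`: functions supported on the unit cube, `⌊β⌋` times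
differentiable, whose top-order partial derivatives are `(β - ⌊β⌋)`-Hölder with
constant `L` (w.r.t. the Euclidean norm). -/
def HolderClass (d : ℕ) (β L : ℝ) (f : (Fin d → ℝ) → ℝ) : Prop :=
  (∀ x, x ∉ Set.Icc (0 : Fin d → ℝ) 1 → f x = 0) ∧
  ContDiff ℝ (lflr β : ℕ) f ∧
  ∀ s : Fin d → ℕ, (∑ i, s i) = lflr β → ∀ x y : Fin d → ℝ,
    |mderiv s f x - mderiv s f y| ≤ L * l2norm (x - y) ^ (β - (lflr β : ℝ))

/-- Barycentric coordinates with respect to the simplex `Δ_d` with vertices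
`0, e_1, …, e_d`. -/
def lam {d : ℕ} (t : Fin (d + 1)) (x : Fin d → ℝ) : ℝ :=
  if h : t = 0 then 1 - ∑ i, x i else x (t.pred h)

/-- The `ℓ`-th principal lattice of the simplex `Δ_d`: points of the simplex all of
whose barycentric coordinates are nonnegative integer multiples of `1/ℓ`. -/
def principalLattice (d ℓ : ℕ) : Set (Fin d → ℝ) :=
  {x | ∀ t : Fin (d + 1), 0 ≤ lam t x ∧ ∃ r : ℕ, (ℓ : ℝ) * lam t x = r}

/-- The Lagrange basis polynomial `p` associated with a point `u` of the `ℓ`-th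
principal lattice:  `p(x) = ∏_{t : λ_t(u) > 0} ∏_{r=0}^{ℓλ_t(u)-1}
(λ_t(x) - r/ℓ)/(λ_t(u) - r/ℓ)`. -/
noncomputable def lagBasis (d ℓ : ℕ) (u x : Fin d → ℝ) : ℝ :=
  ∏ t : Fin (d + 1), ∏ r ∈ Finset.range ⌊(ℓ : ℝ) * lam t u⌋₊,
    (lam t x - r / ℓ) / (lam t u - r / ℓ)

end

/-! The matrix is the evaluation matrix of the monomials of degree `≤ ℓ` at the lattice points,
so it has a right inverse whose `k`-th column is the coefficient vector of the Lagrange polynomial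
`lagBasis d ℓ (U k)`: a product of `ℓ` affine factors in the barycentric coordinates, equal to `1`
at `U k` and vanishing at every other lattice point. -/

open MvPolynomial

lemma sum_lam {d : ℕ} (x : Fin d → ℝ) : ∑ t, lam t x = 1 := by
  simp [Fin.sum_univ_succ, lam, Fin.succ_ne_zero]

lemma lam_succ {d : ℕ} (i : Fin d) (x : Fin d → ℝ) : lam i.succ x = x i := by
  rw [lam, dif_neg (Fin.succ_ne_zero i), Fin.pred_succ]

lemma eq_of_forall_lam_eq {d : ℕ} {x y : Fin d → ℝ} (h : ∀ t, lam t x = lam t y) : x = y :=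
  funext fun i => by simpa only [lam_succ] using h i.succ

section LatticePoint

variable {d ℓ : ℕ} {u x : Fin d → ℝ}

lemma natCast_floor_mul_lam (hu : u ∈ principalLattice d ℓ) (t : Fin (d + 1)) :
    (⌊(ℓ : ℝ) * lam t u⌋₊ : ℝ) = ℓ * lam t u := by
  obtain ⟨r, hr⟩ := (hu t).2
  rw [hr, Nat.floor_natCast]

lemma sum_floor_mul_lam (hu : u ∈ principalLattice d ℓ) :
    ∑ t, ⌊(ℓ : ℝ) * lam t u⌋₊ = ℓ := by
  have h : ((∑ t, ⌊(ℓ : ℝ) * lam t u⌋₊ : ℕ) : ℝ) = ℓ := by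
    simp only [Nat.cast_sum, natCast_floor_mul_lam hu, ← Finset.mul_sum, sum_lam, mul_one]
  exact_mod_cast h

lemma lagBasis_self : lagBasis d ℓ u u = 1 := by
  refine Finset.prod_eq_one fun t _ => Finset.prod_eq_one fun r hr => div_self ?_
  have hr : (r : ℝ) < ℓ * lam t u := Nat.lt_of_lt_floor (Finset.mem_range.mp hr)
  have hℓ : (ℓ : ℝ) ≠ 0 := by
    rintro hℓ
    rw [hℓ, zero_mul] at hr
    exact hr.not_ge r.cast_nonneg
  rw [sub_ne_zero]
  rintro heq
  rw [heq, mul_div_cancel₀ _ hℓ] at hr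
  exact hr.false

lemma lagBasis_eq_zero (hℓ : ℓ ≠ 0) (hu : u ∈ principalLattice d ℓ)
    (hx : x ∈ principalLattice d ℓ) (hxu : x ≠ u) : lagBasis d ℓ u x = 0 := by
  -- Both floor vectors sum to `ℓ`, so the one of `x` cannot dominate that of `u` everywhere.
  obtain ⟨t, ht⟩ : ∃ t, ⌊(ℓ : ℝ) * lam t x⌋₊ < ⌊(ℓ : ℝ) * lam t u⌋₊ := by
    by_contra! hle
    have hsum : ∑ t, ⌊(ℓ : ℝ) * lam t u⌋₊ = ∑ t, ⌊(ℓ : ℝ) * lam t x⌋₊ := by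
      rw [sum_floor_mul_lam hu, sum_floor_mul_lam hx]
    have heq := (Finset.sum_eq_sum_iff_of_le fun t _ => hle t).mp hsum
    refine hxu (eq_of_forall_lam_eq fun t => mul_left_cancel₀ (Nat.cast_ne_zero.mpr hℓ) ?_)
    rw [← natCast_floor_mul_lam hx, ← natCast_floor_mul_lam hu, heq t (Finset.mem_univ t)]
  refine Finset.prod_eq_zero (Finset.mem_univ t) (Finset.prod_eq_zero (Finset.mem_range.mpr ht) ?_)
  rw [natCast_floor_mul_lam hx, mul_div_cancel_left₀ _ (Nat.cast_ne_zero.mpr hℓ), sub_self,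
    zero_div]

lemma lagBasis_eq_ite (hℓ : ℓ ≠ 0) (hu : u ∈ principalLattice d ℓ)
    (hx : x ∈ principalLattice d ℓ) : lagBasis d ℓ u x = if x = u then 1 else 0 := by
  split_ifs with hxu
  · rw [hxu, lagBasis_self]
  · exact lagBasis_eq_zero hℓ hu hx hxu

end LatticePoint

noncomputable def lamPoly (d : ℕ) (t : Fin (d + 1)) : MvPolynomial (Fin d) ℝ :=
  if h : t = 0 then 1 - ∑ i, X i else X (t.pred h)

lemma eval_lamPoly {d : ℕ} (t : Fin (d + 1)) (x : Fin d → ℝ) :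
    eval x (lamPoly d t) = lam t x := by
  unfold lamPoly lam
  split_ifs <;> simp

lemma totalDegree_lamPoly_le {d : ℕ} (t : Fin (d + 1)) : (lamPoly d t).totalDegree ≤ 1 := by
  unfold lamPoly
  split_ifs
  · refine (totalDegree_sub _ _).trans (max_le (by simp) ?_)
    exact totalDegree_finsetSum_le fun i _ => (totalDegree_X i).le
  · exact (totalDegree_X _).le

noncomputable def lagPoly (d ℓ : ℕ) (u : Fin d → ℝ) : MvPolynomial (Fin d) ℝ :=
  ∏ t : Fin (d + 1), ∏ r ∈ Finset.range ⌊(ℓ : ℝ) * lam t u⌋₊,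
    C (lam t u - r / ℓ)⁻¹ * (lamPoly d t - C ((r : ℝ) / ℓ))

lemma eval_lagPoly {d ℓ : ℕ} (u x : Fin d → ℝ) : eval x (lagPoly d ℓ u) = lagBasis d ℓ u x := by
  simp only [lagPoly, lagBasis, map_prod, map_mul, map_sub, eval_C, eval_lamPoly, inv_mul_eq_div]

lemma totalDegree_lagPoly_le {d ℓ : ℕ} (u : Fin d → ℝ) :
    (lagPoly d ℓ u).totalDegree ≤ ∑ t, ⌊(ℓ : ℝ) * lam t u⌋₊ := by
  refine (totalDegree_finsetProd _ _).trans (Finset.sum_le_sum fun t _ => ?_)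
  refine (totalDegree_finsetProd _ _).trans ?_
  refine (Finset.sum_le_card_nsmul _ _ 1 fun r _ => ?_).trans (by simp)
  refine (totalDegree_mul _ _).trans ?_
  rw [totalDegree_C, zero_add]
  exact (totalDegree_sub _ _).trans (max_le (totalDegree_lamPoly_le t) (by simp))

lemma MvPolynomial.eval_eq_sum_coeff_mul_prod_pow {R σ ι : Type*} [CommSemiring R] [Fintype σ]
    [Fintype ι] {α : ι → σ → ℕ} (hα : Function.Injective α) {n : ℕ}
    (hαrange : {s : σ → ℕ | ∑ i, s i ≤ n} ⊆ Set.range α) {p : MvPolynomial σ R}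
    (hp : p.totalDegree ≤ n) (x : σ → R) :
    eval x p = ∑ j, coeff (Finsupp.equivFunOnFinite.symm (α j)) p * ∏ i, x i ^ α j i := by
  let e : ι ↪ (σ →₀ ℕ) := ⟨fun j => Finsupp.equivFunOnFinite.symm (α j),
    Finsupp.equivFunOnFinite.symm.injective.comp hα⟩
  have hsupp : p.support ⊆ Finset.univ.map e := by
    intro m hm
    obtain ⟨j, hj⟩ : ⇑m ∈ Set.range α := hαrange <|
      (by simpa [Finsupp.sum_fintype] using le_totalDegree hm : ∑ i, m i ≤ p.totalDegree).trans hp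
    exact Finset.mem_map.mpr ⟨j, Finset.mem_univ j, by simp [e, hj]⟩
  rw [eval_eq', Finset.sum_subset hsupp fun m _ hm => by rw [notMem_support_iff.mp hm, zero_mul],
    Finset.sum_map]
  rfl

theorem stmt5_general (d ℓ : ℕ) (hℓ : 1 ≤ ℓ)
    (M : ℕ)
    (U : Fin M → (Fin d → ℝ)) (hUinj : Function.Injective U)
    (hUrange : Set.range U = principalLattice d ℓ)
    (α : Fin M → (Fin d → ℕ)) (hαinj : Function.Injective α)
    (hαrange : Set.range α = {s : Fin d → ℕ | ∑ i, s i ≤ ℓ}) :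
    IsUnit (Matrix.of fun k j : Fin M => ∏ i, U k i ^ α j i) := by
  have hU : ∀ k, U k ∈ principalLattice d ℓ := fun k => hUrange ▸ Set.mem_range_self k
  refine IsUnit.of_mul_eq_one
    (Matrix.of fun j k => coeff (Finsupp.equivFunOnFinite.symm (α j)) (lagPoly d ℓ (U k))) ?_
  ext k k'
  have hdeg : (lagPoly d ℓ (U k')).totalDegree ≤ ℓ :=
    (totalDegree_lagPoly_le (U k')).trans (sum_floor_mul_lam (hU k')).le
  rw [Matrix.mul_apply, Matrix.one_apply]
  simp only [Matrix.of_apply, mul_comm (∏ i, _)]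
  rw [← eval_eq_sum_coeff_mul_prod_pow hαinj hαrange.ge hdeg, eval_lagPoly,
    lagBasis_eq_ite (by omega) (hU k') (hU k)]
  simp only [hUinj.eq_iff]

/-- The Vandermonde-type matrix `𝒱_{k,α} = U_k^α`, with rows indexed by
the points of the `ℓ`-th principal lattice and columns indexed by the multi-indices
`α` with `|α| ≤ ℓ`, is invertible. -/
theorem stmt5 (d ℓ : ℕ) (hd : 1 ≤ d) (hℓ : 1 ≤ ℓ)
    (M : ℕ) (hM : M = Nat.choose (ℓ + d) d)
    (U : Fin M → (Fin d → ℝ)) (hUinj : Function.Injective U)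
    (hUrange : Set.range U = principalLattice d ℓ)
    (α : Fin M → (Fin d → ℕ)) (hαinj : Function.Injective α)
    (hαrange : Set.range α = {s : Fin d → ℕ | ∑ i, s i ≤ ℓ}) :
    IsUnit (Matrix.of fun k j : Fin M => ∏ i, U k i ^ α j i) :=
  stmt5_general d ℓ hℓ M U hUinj hUrange α hαinj hαrange
end

section
/- Let β > 0, L > 0, and d ≥ 1. Then every f ∈ H(β, L) satisfies sup_{x ∈ ℝ^d} |f(x)| ≤ d^{3⌊β⌋/2 + 1/2} · L. -/
open MeasureTheory Finset
open scoped ENNReal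

/-! A function vanishing off the unit cube can be reached from any point `y` of `ℝ^d` by a
unit step `y ± eᵢ` that leaves the cube. For the top derivative `∂ᵢ^⌊β⌋ f`, which vanishes
there too, the Hölder condition over that step gives `|∂ᵢ^⌊β⌋ f| ≤ L`; the mean value
theorem over the same step then carries the bound down to `∂ᵢ^(⌊β⌋-1) f`, …, `f`. Hence
`|f| ≤ L ≤ d^{3⌊β⌋/2 + 1/2} L`. -/

section

variable {d : ℕ}

lemma l2norm_single (i : Fin d) (a : ℝ) : l2norm (Pi.single i a) = |a| := by
  simp [l2norm, Pi.single_apply, Real.sqrt_sq_eq_abs]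

lemma exists_abs_eq_one_add_single_notMem_Icc (y : Fin d → ℝ) (i : Fin d) :
    ∃ a : ℝ, |a| = 1 ∧ y + Pi.single i a ∉ Set.Icc 0 1 := by
  by_cases hy : y i ≤ 0
  · refine ⟨-1, by simp, fun h => ?_⟩
    have : 0 ≤ y i - 1 := by simpa [sub_eq_add_neg] using h.1 i
    linarith
  · refine ⟨1, by simp, fun h => ?_⟩
    have : y i + 1 ≤ 1 := by simpa using h.2 i
    linarith

lemma foldr_pder_iterate_single {l : List (Fin d)} (hl : l.Nodup) (i : Fin d) (k : ℕ)
    (f : (Fin d → ℝ) → ℝ) :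
    l.foldr (fun j g => (pder j)^[(Pi.single i k : Fin d → ℕ) j] g) f =
      if i ∈ l then (pder i)^[k] f else f := by
  induction l with
  | nil => simp
  | cons a l ih =>
    obtain ⟨ha, hl⟩ := List.nodup_cons.1 hl
    rw [List.foldr_cons, ih hl]
    by_cases hai : a = i
    · subst hai
      simp [ha]
    · simp [Ne.symm hai]

lemma mderiv_single (i : Fin d) (k : ℕ) (f : (Fin d → ℝ) → ℝ) :
    mderiv (Pi.single i k) f = (pder i)^[k] f := by
  simp [mderiv, foldr_pder_iterate_single (List.nodup_finRange d)]

lemma contDiff_pder {n : ℕ} {g : (Fin d → ℝ) → ℝ} (hg : ContDiff ℝ (n + 1 : ℕ) g)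
    (i : Fin d) : ContDiff ℝ n (pder i g) :=
  (ContinuousLinearMap.apply ℝ ℝ (Pi.single i 1)).contDiff.comp
    (hg.fderiv_right (by norm_cast))

lemma pder_eq_zero_of_isOpen {U : Set (Fin d → ℝ)} (hU : IsOpen U) {g : (Fin d → ℝ) → ℝ}
    (hg : ∀ x ∈ U, g x = 0) (i : Fin d) : ∀ x ∈ U, pder i g x = 0 := by
  intro x hx
  have hev : g =ᶠ[nhds x] fun _ => 0 :=
    Filter.eventually_of_mem (hU.mem_nhds hx) hg
  simp [pder, hev.fderiv_eq]

lemma pder_iterate_eq_zero_of_isOpen {U : Set (Fin d → ℝ)} (hU : IsOpen U)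
    {g : (Fin d → ℝ) → ℝ} (hg : ∀ x ∈ U, g x = 0) (i : Fin d) (n : ℕ) :
    ∀ x ∈ U, (pder i)^[n] g x = 0 := by
  induction n with
  | zero => exact hg
  | succ n ih =>
    rw [Function.iterate_succ_apply']
    exact pder_eq_zero_of_isOpen hU ih i

lemma abs_sub_le_of_abs_pder_le {g : (Fin d → ℝ) → ℝ} (hg : Differentiable ℝ g) {i : Fin d}
    {C : ℝ} (hC : ∀ x, |pder i g x| ≤ C) (y : Fin d → ℝ) (a : ℝ) :
    |g (y + Pi.single i a) - g y| ≤ C * |a| := by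
  have hline : ∀ t : ℝ, HasDerivAt (fun t : ℝ => g (y + t • Pi.single i a))
      (fderiv ℝ g (y + t • Pi.single i a) (Pi.single i a)) t := fun t =>
    (hg _).hasFDerivAt.comp_hasDerivAt t
      (by simpa using ((hasDerivAt_id t).smul_const (Pi.single i a)).const_add y)
  have hdir : ∀ x, fderiv ℝ g x (Pi.single i a) = a * pder i g x := fun x => by
    rw [pder, ← smul_eq_mul, ← map_smul, ← Pi.single_smul, smul_eq_mul, mul_one]
  have := norm_image_sub_le_of_norm_deriv_le_segment_01'
    (fun t _ => (hline t).hasDerivWithinAt)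
    (fun t _ => by
      rw [hdir, Real.norm_eq_abs, abs_mul, mul_comm]
      exact mul_le_mul_of_nonneg_right (hC _) (abs_nonneg a))
  simpa using this

lemma abs_le_of_abs_pder_iterate_le {n : ℕ} {g : (Fin d → ℝ) → ℝ} (hg : ContDiff ℝ n g)
    (hsupp : ∀ x, x ∉ Set.Icc (0 : Fin d → ℝ) 1 → g x = 0) {i : Fin d} {C : ℝ}
    (hC : ∀ x, |(pder i)^[n] g x| ≤ C) (y : Fin d → ℝ) : |g y| ≤ C := by
  induction n generalizing g y with
  | zero => exact hC y
  | succ n ih =>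
    have hpder : ∀ x, |pder i g x| ≤ C := fun x =>
      ih (contDiff_pder hg i) (pder_eq_zero_of_isOpen isClosed_Icc.isOpen_compl hsupp i) hC x
    obtain ⟨a, ha, hout⟩ := exists_abs_eq_one_add_single_notMem_Icc y i
    have := abs_sub_le_of_abs_pder_le (hg.differentiable (by simp)) hpder y a
    rwa [hsupp _ hout, zero_sub, abs_neg, ha, mul_one] at this

namespace HolderClass

variable {β L : ℝ} {f : (Fin d → ℝ) → ℝ}

lemma abs_pder_iterate_lflr_le (hf : HolderClass d β L f) (i : Fin d) (y : Fin d → ℝ) :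
    |(pder i)^[lflr β] f y| ≤ L := by
  obtain ⟨a, ha, hout⟩ := exists_abs_eq_one_add_single_notMem_Icc y i
  have hzero : (pder i)^[lflr β] f (y + Pi.single i a) = 0 :=
    pder_iterate_eq_zero_of_isOpen isClosed_Icc.isOpen_compl hf.1 i _ _ hout
  have hstep : y - (y + Pi.single i a) = Pi.single i (-a) := by simp [Pi.single_neg]
  have := hf.2.2 (Pi.single i (lflr β)) (by simp) y (y + Pi.single i a)
  rwa [mderiv_single, hzero, sub_zero, hstep, l2norm_single, abs_neg, ha,
    Real.one_rpow, mul_one] at this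

lemma abs_le (hf : HolderClass d β L f) (i : Fin d) (y : Fin d → ℝ) : |f y| ≤ L :=
  abs_le_of_abs_pder_iterate_le hf.2.1 hf.1 (hf.abs_pder_iterate_lflr_le i) y

end HolderClass

end

theorem stmt13_general (d : ℕ) (hd : 1 ≤ d) (β L : ℝ)
    (f : (Fin d → ℝ) → ℝ) (hf : HolderClass d β L f) :
    ∀ x : Fin d → ℝ, |f x| ≤ (d : ℝ) ^ (3 * (lflr β : ℝ) / 2 + 1 / 2) * L := by
  intro x
  have hfL : |f x| ≤ L := hf.abs_le ⟨0, hd⟩ x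
  have hpow : 1 ≤ (d : ℝ) ^ (3 * (lflr β : ℝ) / 2 + 1 / 2) :=
    Real.one_le_rpow (by exact_mod_cast hd) (by positivity)
  calc |f x| ≤ L := hfL
    _ ≤ (d : ℝ) ^ (3 * (lflr β : ℝ) / 2 + 1 / 2) * L :=
      le_mul_of_one_le_left ((abs_nonneg _).trans hfL) hpow

/-- Uniform boundedness of the Hölder class: every `f ∈ H(β, L)`
satisfies `|f(x)| ≤ d^{3⌊β⌋/2 + 1/2} L` for all `x`. -/
theorem stmt13 (d : ℕ) (hd : 1 ≤ d) (β L : ℝ) (hβ : 0 < β) (hL : 0 < L)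
    (f : (Fin d → ℝ) → ℝ) (hf : HolderClass d β L f) :
    ∀ x : Fin d → ℝ, |f x| ≤ (d : ℝ) ^ (3 * (lflr β : ℝ) / 2 + 1 / 2) * L :=
  stmt13_general d hd β L f hf
end
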